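/- For ψ, ξ, χ ∈ H²_0(Ω) (sufficiently smooth), b(ψ; ξ, χ) = b*(χ; ξ, ψ) − b*(ξ; χ, ψ), where b(ψ; ξ, χ) = ∫_Ω Δψ (ξ_y χ_x − ξ_x χ_y) dx and b*(ξ; ψ, φ) = ∫_Ω [(ξ_y ψ_{xy} − ξ_x ψ_{yy}) φ_y − (ξ_x ψ_{xy} − ξ_y ψ_{xx}) φ_x] dx. -/

import Mathlib

open MeasureTheory Real

/-- Partial derivative in the x-direction. -/
noncomputable def pdx (f : ℝ × ℝ → ℝ) (p : ℝ × ℝ) : ℝ := fderiv ℝ f p (1, 0)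

/-- Partial derivative in the y-direction. -/
noncomputable def pdy (f : ℝ × ℝ → ℝ) (p : ℝ × ℝ) : ℝ := fderiv ℝ f p (0, 1)

/-- Laplacian. -/
noncomputable def lap (f : ℝ × ℝ → ℝ) (p : ℝ × ℝ) : ℝ := pdx (pdx f) p + pdy (pdy f) p

/-- Smooth compactly supported function with support in `Ω` (dense subspace of `H²₀(Ω)`). -/
def TestFun (Ω : Set (ℝ × ℝ)) (f : ℝ × ℝ → ℝ) : Prop :=
  ContDiff ℝ (⊤ : ℕ∞) f ∧ HasCompactSupport f ∧ tsupport f ⊆ Ω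

/-- `L²(Ω)` norm. -/
noncomputable def L2 (Ω : Set (ℝ × ℝ)) (f : ℝ × ℝ → ℝ) : ℝ :=
  Real.sqrt (∫ p in Ω, (f p) ^ 2)

/-- `L²(Ω)` norm of the gradient. -/
noncomputable def gradL2 (Ω : Set (ℝ × ℝ)) (f : ℝ × ℝ → ℝ) : ℝ :=
  Real.sqrt (∫ p in Ω, ((pdx f p) ^ 2 + (pdy f p) ^ 2))

/-- Full `H²` seminorm: `|v|₂² = ∫ (v_xx² + v_yy² + 2 v_xy²)`. -/
noncomputable def semiH2 (Ω : Set (ℝ × ℝ)) (f : ℝ × ℝ → ℝ) : ℝ :=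
  Real.sqrt (∫ p in Ω,
    ((pdx (pdx f) p) ^ 2 + (pdy (pdy f) p) ^ 2 + 2 * (pdy (pdx f) p) ^ 2))

/-- `L²(Ω)` inner product. -/
noncomputable def inner2 (Ω : Set (ℝ × ℝ)) (f g : ℝ × ℝ → ℝ) : ℝ := ∫ p in Ω, f p * g p

/-- `L²(Ω)` inner product of gradients. -/
noncomputable def gradInner (Ω : Set (ℝ × ℝ)) (f g : ℝ × ℝ → ℝ) : ℝ :=
  ∫ p in Ω, (pdx f p * pdx g p + pdy f p * pdy g p)

/-- The trilinear form `b(ξ; ψ, χ) = ∫ Δξ (ψ_y χ_x − ψ_x χ_y)`. -/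
noncomputable def bform (Ω : Set (ℝ × ℝ)) (ξ ψ χ : ℝ × ℝ → ℝ) : ℝ :=
  ∫ p in Ω, lap ξ p * (pdy ψ p * pdx χ p - pdx ψ p * pdy χ p)

/-- Dual norm `‖F‖₋₂` (here `F` is represented by an `L²`-type pairing `f ↦ (f, ·)`). -/
noncomputable def negTwoNorm (Ω : Set (ℝ × ℝ)) (f : ℝ × ℝ → ℝ) : ℝ :=
  sSup {r : ℝ | ∃ v, TestFun Ω v ∧ L2 Ω (lap v) ≠ 0 ∧ r = inner2 Ω f v / L2 Ω (lap v)}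

/-- The `H⁶(Ω)` seminorm `|f|₆`. -/
noncomputable def semiH6 (Ω : Set (ℝ × ℝ)) (f : ℝ × ℝ → ℝ) : ℝ :=
  Real.sqrt (∫ p in Ω, ‖iteratedFDeriv ℝ 6 f p‖ ^ 2)

/-- The auxiliary trilinear form `b*`. -/
noncomputable def bstar (Ω : Set (ℝ × ℝ)) (ξ ψ φ : ℝ × ℝ → ℝ) : ℝ :=
  ∫ p in Ω,
    ((pdy ξ p * pdy (pdx ψ) p - pdx ξ p * pdy (pdy ψ) p) * pdy φ p
      - (pdx ξ p * pdy (pdx ψ) p - pdy ξ p * pdx (pdx ψ) p) * pdx φ p)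

lemma pdv_contDiff {f : ℝ × ℝ → ℝ} (hf : ContDiff ℝ (⊤ : ℕ∞) f) (v : ℝ × ℝ) :
    ContDiff ℝ (⊤ : ℕ∞) (fun p => fderiv ℝ f p v) :=
  (hf.fderiv_right (by simp)).clm_apply contDiff_const

lemma pdx_contDiff {f : ℝ × ℝ → ℝ} (hf : ContDiff ℝ (⊤ : ℕ∞) f) : ContDiff ℝ (⊤ : ℕ∞) (pdx f) :=
  pdv_contDiff hf _

lemma pdy_contDiff {f : ℝ × ℝ → ℝ} (hf : ContDiff ℝ (⊤ : ℕ∞) f) : ContDiff ℝ (⊤ : ℕ∞) (pdy f) :=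
  pdv_contDiff hf _

lemma tsupport_pdx_subset (f : ℝ × ℝ → ℝ) : tsupport (pdx f) ⊆ tsupport f := by
  apply closure_minimal _ (isClosed_tsupport f)
  intro p hp
  have : fderiv ℝ f p ≠ 0 := by
    intro h; simp [pdx, h] at hp
  exact support_fderiv_subset ℝ this

lemma tsupport_pdy_subset (f : ℝ × ℝ → ℝ) : tsupport (pdy f) ⊆ tsupport f := by
  apply closure_minimal _ (isClosed_tsupport f)
  intro p hp
  have : fderiv ℝ f p ≠ 0 := by
    intro h; simp [pdy, h] at hp
  exact support_fderiv_subset ℝ this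

lemma pdx_hcs {f : ℝ × ℝ → ℝ} (hf : HasCompactSupport f) : HasCompactSupport (pdx f) :=
  hf.of_isClosed_subset (isClosed_tsupport _) (tsupport_pdx_subset f)

lemma pdy_hcs {f : ℝ × ℝ → ℝ} (hf : HasCompactSupport f) : HasCompactSupport (pdy f) :=
  hf.of_isClosed_subset (isClosed_tsupport _) (tsupport_pdy_subset f)

lemma integral_deriv_zero_of_hcs {g : ℝ → ℝ} (hg : ContDiff ℝ 1 g) (h : HasCompactSupport g) :
    ∫ x, deriv g x = 0 := by
  have hint : Integrable (deriv g) :=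
    (hg.continuous_deriv le_rfl).integrable_of_hasCompactSupport h.deriv
  have h1 := HasCompactSupport.integral_Iic_deriv_eq hg h 0
  have h2 := HasCompactSupport.integral_Ioi_deriv_eq hg h 0
  have h3 := intervalIntegral.integral_Iic_add_Ioi (b := (0:ℝ)) (f := deriv g)
    hint.integrableOn hint.integrableOn
  rw [← h3, h1, h2]; ring

lemma slice_hasDerivAt_x {F : ℝ × ℝ → ℝ} (hF : ContDiff ℝ (⊤ : ℕ∞) F) (y x : ℝ) :
    HasDerivAt (fun t => F (t, y)) (pdx F (x, y)) x := by
  have h1 : HasDerivAt (fun t : ℝ => (t, y)) ((1 : ℝ), (0 : ℝ)) x :=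
    (hasDerivAt_id x).prodMk (hasDerivAt_const x y)
  exact ((hF.differentiable (by simp) (x, y)).hasFDerivAt).comp_hasDerivAt x h1

lemma slice_hasDerivAt_y {F : ℝ × ℝ → ℝ} (hF : ContDiff ℝ (⊤ : ℕ∞) F) (x y : ℝ) :
    HasDerivAt (fun t => F (x, t)) (pdy F (x, y)) y := by
  have h1 : HasDerivAt (fun t : ℝ => (x, t)) ((0 : ℝ), (1 : ℝ)) y :=
    (hasDerivAt_const y x).prodMk (hasDerivAt_id y)
  exact ((hF.differentiable (by simp) (x, y)).hasFDerivAt).comp_hasDerivAt y h1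

lemma slice_hcs_x {F : ℝ × ℝ → ℝ} (h : HasCompactSupport F) (y : ℝ) :
    HasCompactSupport (fun t => F (t, y)) := by
  have : Isometry (fun t : ℝ => (t, y)) := fun a b => by
    simp [Prod.edist_eq, edist_comm]
  exact h.comp_isClosedEmbedding this.isClosedEmbedding

lemma slice_hcs_y {F : ℝ × ℝ → ℝ} (h : HasCompactSupport F) (x : ℝ) :
    HasCompactSupport (fun t => F (x, t)) := by
  have : Isometry (fun t : ℝ => (x, t)) := fun a b => by
    simp [Prod.edist_eq, edist_comm]
  exact h.comp_isClosedEmbedding this.isClosedEmbedding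

lemma integral_pdx_zero {F : ℝ × ℝ → ℝ} (hF : ContDiff ℝ (⊤ : ℕ∞) F) (h : HasCompactSupport F) :
    ∫ p, pdx F p = 0 := by
  have hint : Integrable (pdx F) :=
    (pdx_contDiff hF).continuous.integrable_of_hasCompactSupport (pdx_hcs h)
  rw [show (volume : Measure (ℝ × ℝ)) = (volume : Measure ℝ).prod volume from
    (Measure.volume_eq_prod _ _)] at hint ⊢
  rw [MeasureTheory.integral_prod_symm _ hint]
  have : ∀ y : ℝ, (∫ x : ℝ, pdx F (x, y)) = 0 := by
    intro y
    have hd : ∀ x : ℝ, deriv (fun t => F (t, y)) x = pdx F (x, y) := fun x =>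
      (slice_hasDerivAt_x hF y x).deriv
    rw [show (fun x : ℝ => pdx F (x, y)) = deriv (fun t => F (t, y)) from
      funext fun x => (hd x).symm]
    exact integral_deriv_zero_of_hcs
      ((hF.comp ((contDiff_id).prodMk contDiff_const)).of_le (by simp)) (slice_hcs_x h y)
  simp [this]

lemma integral_pdy_zero {F : ℝ × ℝ → ℝ} (hF : ContDiff ℝ (⊤ : ℕ∞) F) (h : HasCompactSupport F) :
    ∫ p, pdy F p = 0 := by
  have hint : Integrable (pdy F) :=
    (pdy_contDiff hF).continuous.integrable_of_hasCompactSupport (pdy_hcs h)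
  rw [show (volume : Measure (ℝ × ℝ)) = (volume : Measure ℝ).prod volume from
    (Measure.volume_eq_prod _ _)] at hint ⊢
  rw [MeasureTheory.integral_prod _ hint]
  have : ∀ x : ℝ, (∫ y : ℝ, pdy F (x, y)) = 0 := by
    intro x
    have hd : ∀ y : ℝ, deriv (fun t => F (x, t)) y = pdy F (x, y) := fun y =>
      (slice_hasDerivAt_y hF x y).deriv
    rw [show (fun y : ℝ => pdy F (x, y)) = deriv (fun t => F (x, t)) from
      funext fun y => (hd y).symm]
    exact integral_deriv_zero_of_hcs
      ((hF.comp ((contDiff_const).prodMk contDiff_id)).of_le (by simp)) (slice_hcs_y h x)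
  simp [this]

lemma pdx_mul {f g : ℝ × ℝ → ℝ} (hf : ContDiff ℝ (⊤ : ℕ∞) f) (hg : ContDiff ℝ (⊤ : ℕ∞) g) (p : ℝ × ℝ) :
    pdx (fun q => f q * g q) p = pdx f p * g p + f p * pdx g p := by
  unfold pdx
  rw [fderiv_fun_mul (hf.differentiable (by simp) p) (hg.differentiable (by simp) p)]
  simp; ring

lemma pdy_mul {f g : ℝ × ℝ → ℝ} (hf : ContDiff ℝ (⊤ : ℕ∞) f) (hg : ContDiff ℝ (⊤ : ℕ∞) g) (p : ℝ × ℝ) :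
    pdy (fun q => f q * g q) p = pdy f p * g p + f p * pdy g p := by
  unfold pdy
  rw [fderiv_fun_mul (hf.differentiable (by simp) p) (hg.differentiable (by simp) p)]
  simp; ring

lemma pdx_sub {f g : ℝ × ℝ → ℝ} (hf : ContDiff ℝ (⊤ : ℕ∞) f) (hg : ContDiff ℝ (⊤ : ℕ∞) g) (p : ℝ × ℝ) :
    pdx (fun q => f q - g q) p = pdx f p - pdx g p := by
  unfold pdx
  rw [fderiv_fun_sub (hf.differentiable (by simp) p) (hg.differentiable (by simp) p)]
  simp

lemma pdy_sub {f g : ℝ × ℝ → ℝ} (hf : ContDiff ℝ (⊤ : ℕ∞) f) (hg : ContDiff ℝ (⊤ : ℕ∞) g) (p : ℝ × ℝ) :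
    pdy (fun q => f q - g q) p = pdy f p - pdy g p := by
  unfold pdy
  rw [fderiv_fun_sub (hf.differentiable (by simp) p) (hg.differentiable (by simp) p)]
  simp

lemma pdv_pdw {f : ℝ × ℝ → ℝ} (hf : ContDiff ℝ (⊤ : ℕ∞) f) (p v w : ℝ × ℝ) :
    fderiv ℝ (fun q => fderiv ℝ f q w) p v = fderiv ℝ (fderiv ℝ f) p v w := by
  rw [fderiv_clm_apply ((hf.fderiv_right (m := 1) (by exact WithTop.coe_le_coe.mpr le_top)).differentiable (by simp) p)
    (differentiableAt_const w)]
  simp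

lemma pdx_pdy_comm {f : ℝ × ℝ → ℝ} (hf : ContDiff ℝ (⊤ : ℕ∞) f) (p : ℝ × ℝ) :
    pdx (pdy f) p = pdy (pdx f) p := by
  have hs : IsSymmSndFDerivAt ℝ f p :=
    hf.contDiffAt.isSymmSndFDerivAt (by rw [minSmoothness_of_isRCLikeNormedField]; exact WithTop.coe_le_coe.mpr le_top)
  show fderiv ℝ (fun q => fderiv ℝ f q (0, 1)) p (1, 0)
      = fderiv ℝ (fun q => fderiv ℝ f q (1, 0)) p (0, 1)
  rw [pdv_pdw hf, pdv_pdw hf, hs.eq]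

lemma pdx_zero_outside {f : ℝ × ℝ → ℝ} {p : ℝ × ℝ} (hp : p ∉ tsupport f) : pdx f p = 0 :=
  image_eq_zero_of_notMem_tsupport (fun h => hp (tsupport_pdx_subset f h))

lemma pdy_zero_outside {f : ℝ × ℝ → ℝ} {p : ℝ × ℝ} (hp : p ∉ tsupport f) : pdy f p = 0 :=
  image_eq_zero_of_notMem_tsupport (fun h => hp (tsupport_pdy_subset f h))

lemma hcs_combo {ψ : ℝ × ℝ → ℝ} (hψc : HasCompactSupport ψ) (A B : ℝ × ℝ → ℝ) :
    HasCompactSupport (fun p => A p * pdy ψ p - B p * pdx ψ p) := by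
  apply hψc.of_isClosed_subset (isClosed_tsupport _)
  apply closure_minimal _ (isClosed_tsupport ψ)
  intro p hp
  by_contra h
  simp only [Function.mem_support] at hp
  rw [pdx_zero_outside h, pdy_zero_outside h] at hp
  simp at hp

/-- `b(ψ; ξ, χ) = b*(χ; ξ, ψ) − b*(ξ; χ, ψ)`. -/
theorem stmt7 (Ω : Set (ℝ × ℝ)) (hΩ : IsOpen Ω) (hb : Bornology.IsBounded Ω)
    (ψ ξ χ : ℝ × ℝ → ℝ) (hψ : TestFun Ω ψ) (hξ : TestFun Ω ξ) (hχ : TestFun Ω χ) :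
    bform Ω ψ ξ χ = bstar Ω χ ξ ψ - bstar Ω ξ χ ψ := by
  obtain ⟨hψs, hψc, hψΩ⟩ := hψ
  obtain ⟨hξs, hξc, hξΩ⟩ := hξ
  obtain ⟨hχs, hχc, hχΩ⟩ := hχ
  have hψ0 : ∀ p ∉ Ω, p ∉ tsupport ψ := fun p hp h => hp (hψΩ h)
  -- G and the two divergence fields
  have hG : ContDiff ℝ (⊤ : ℕ∞) (fun q => pdy ξ q * pdx χ q - pdx ξ q * pdy χ q) :=
    ((pdy_contDiff hξs).mul (pdx_contDiff hχs)).sub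
      ((pdx_contDiff hξs).mul (pdy_contDiff hχs))
  have hF1s : ContDiff ℝ (⊤ : ℕ∞) (fun q => pdx ψ q * (pdy ξ q * pdx χ q - pdx ξ q * pdy χ q)) :=
    (pdx_contDiff hψs).mul hG
  have hF2s : ContDiff ℝ (⊤ : ℕ∞) (fun q => pdy ψ q * (pdy ξ q * pdx χ q - pdx ξ q * pdy χ q)) :=
    (pdy_contDiff hψs).mul hG
  have hF1c : HasCompactSupport
      (fun q => pdx ψ q * (pdy ξ q * pdx χ q - pdx ξ q * pdy χ q)) :=
    (pdx_hcs hψc).mul_right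
  have hF2c : HasCompactSupport
      (fun q => pdy ψ q * (pdy ξ q * pdx χ q - pdx ξ q * pdy χ q)) :=
    (pdy_hcs hψc).mul_right
  -- convert set integrals to integrals over the plane
  have eA : bform Ω ψ ξ χ
      = ∫ p, lap ψ p * (pdy ξ p * pdx χ p - pdx ξ p * pdy χ p) := by
    rw [bform]
    apply setIntegral_eq_integral_of_forall_compl_eq_zero
    intro p hp
    have h := hψ0 p hp
    have h1 : pdx (pdx ψ) p = 0 :=
      pdx_zero_outside (fun hh => h (tsupport_pdx_subset ψ hh))
    have h2 : pdy (pdy ψ) p = 0 :=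
      pdy_zero_outside (fun hh => h (tsupport_pdy_subset ψ hh))
    simp [lap, h1, h2]
  have eB : bstar Ω χ ξ ψ
      = ∫ p, ((pdy χ p * pdy (pdx ξ) p - pdx χ p * pdy (pdy ξ) p) * pdy ψ p
          - (pdx χ p * pdy (pdx ξ) p - pdy χ p * pdx (pdx ξ) p) * pdx ψ p) := by
    rw [bstar]
    apply setIntegral_eq_integral_of_forall_compl_eq_zero
    intro p hp
    have h := hψ0 p hp
    simp [pdx_zero_outside h, pdy_zero_outside h]
  have eC : bstar Ω ξ χ ψ
      = ∫ p, ((pdy ξ p * pdy (pdx χ) p - pdx ξ p * pdy (pdy χ) p) * pdy ψ p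
          - (pdx ξ p * pdy (pdx χ) p - pdy ξ p * pdx (pdx χ) p) * pdx ψ p) := by
    rw [bstar]
    apply setIntegral_eq_integral_of_forall_compl_eq_zero
    intro p hp
    have h := hψ0 p hp
    simp [pdx_zero_outside h, pdy_zero_outside h]
  -- integrability
  have hBc : HasCompactSupport
      (fun p => (pdy χ p * pdy (pdx ξ) p - pdx χ p * pdy (pdy ξ) p) * pdy ψ p
          - (pdx χ p * pdy (pdx ξ) p - pdy χ p * pdx (pdx ξ) p) * pdx ψ p) :=
    hcs_combo hψc _ _
  have hCc : HasCompactSupport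
      (fun p => (pdy ξ p * pdy (pdx χ) p - pdx ξ p * pdy (pdy χ) p) * pdy ψ p
          - (pdx ξ p * pdy (pdx χ) p - pdy ξ p * pdx (pdx χ) p) * pdx ψ p) :=
    hcs_combo hψc _ _
  have hBcont : Continuous
      (fun p => (pdy χ p * pdy (pdx ξ) p - pdx χ p * pdy (pdy ξ) p) * pdy ψ p
          - (pdx χ p * pdy (pdx ξ) p - pdy χ p * pdx (pdx ξ) p) * pdx ψ p) := by
    have c : ∀ (f : ℝ × ℝ → ℝ), ContDiff ℝ (⊤ : ℕ∞) f → Continuous (pdx f) ∧ Continuous (pdy f) :=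
      fun f hf => ⟨(pdx_contDiff hf).continuous, (pdy_contDiff hf).continuous⟩
    exact ((((c χ hχs).2.mul (c (pdx ξ) (pdx_contDiff hξs)).2).sub
        ((c χ hχs).1.mul (c (pdy ξ) (pdy_contDiff hξs)).2)).mul (c ψ hψs).2).sub
      ((((c χ hχs).1.mul (c (pdx ξ) (pdx_contDiff hξs)).2).sub
        ((c χ hχs).2.mul (c (pdx ξ) (pdx_contDiff hξs)).1)).mul (c ψ hψs).1)
  have hCcont : Continuous
      (fun p => (pdy ξ p * pdy (pdx χ) p - pdx ξ p * pdy (pdy χ) p) * pdy ψ p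
          - (pdx ξ p * pdy (pdx χ) p - pdy ξ p * pdx (pdx χ) p) * pdx ψ p) := by
    have c : ∀ (f : ℝ × ℝ → ℝ), ContDiff ℝ (⊤ : ℕ∞) f → Continuous (pdx f) ∧ Continuous (pdy f) :=
      fun f hf => ⟨(pdx_contDiff hf).continuous, (pdy_contDiff hf).continuous⟩
    exact ((((c ξ hξs).2.mul (c (pdx χ) (pdx_contDiff hχs)).2).sub
        ((c ξ hξs).1.mul (c (pdy χ) (pdy_contDiff hχs)).2)).mul (c ψ hψs).2).sub
      ((((c ξ hξs).1.mul (c (pdx χ) (pdx_contDiff hχs)).2).sub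
        ((c ξ hξs).2.mul (c (pdx χ) (pdx_contDiff hχs)).1)).mul (c ψ hψs).1)
  have hBi : Integrable
      (fun p => (pdy χ p * pdy (pdx ξ) p - pdx χ p * pdy (pdy ξ) p) * pdy ψ p
          - (pdx χ p * pdy (pdx ξ) p - pdy χ p * pdx (pdx ξ) p) * pdx ψ p) :=
    hBcont.integrable_of_hasCompactSupport hBc
  have hCi : Integrable
      (fun p => (pdy ξ p * pdy (pdx χ) p - pdx ξ p * pdy (pdy χ) p) * pdy ψ p
          - (pdx ξ p * pdy (pdx χ) p - pdy ξ p * pdx (pdx χ) p) * pdx ψ p) :=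
    hCcont.integrable_of_hasCompactSupport hCc
  have hDxi : Integrable
      (pdx (fun q => pdx ψ q * (pdy ξ q * pdx χ q - pdx ξ q * pdy χ q))) :=
    (pdx_contDiff hF1s).continuous.integrable_of_hasCompactSupport (pdx_hcs hF1c)
  have hDyi : Integrable
      (pdy (fun q => pdy ψ q * (pdy ξ q * pdx χ q - pdx ξ q * pdy χ q))) :=
    (pdy_contDiff hF2s).continuous.integrable_of_hasCompactSupport (pdy_hcs hF2c)
  -- derivative expansions
  have hDx : ∀ p, pdx (fun q => pdx ψ q * (pdy ξ q * pdx χ q - pdx ξ q * pdy χ q)) p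
      = pdx (pdx ψ) p * (pdy ξ p * pdx χ p - pdx ξ p * pdy χ p)
        + pdx ψ p * ((pdy (pdx ξ) p * pdx χ p + pdy ξ p * pdx (pdx χ) p)
            - (pdx (pdx ξ) p * pdy χ p + pdx ξ p * pdy (pdx χ) p)) := by
    intro p
    rw [pdx_mul (pdx_contDiff hψs) hG p,
      pdx_sub ((pdy_contDiff hξs).mul (pdx_contDiff hχs))
        ((pdx_contDiff hξs).mul (pdy_contDiff hχs)) p,
      pdx_mul (pdy_contDiff hξs) (pdx_contDiff hχs) p,
      pdx_mul (pdx_contDiff hξs) (pdy_contDiff hχs) p,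
      pdx_pdy_comm hξs p, pdx_pdy_comm hχs p]
  have hDy : ∀ p, pdy (fun q => pdy ψ q * (pdy ξ q * pdx χ q - pdx ξ q * pdy χ q)) p
      = pdy (pdy ψ) p * (pdy ξ p * pdx χ p - pdx ξ p * pdy χ p)
        + pdy ψ p * ((pdy (pdy ξ) p * pdx χ p + pdy ξ p * pdy (pdx χ) p)
            - (pdy (pdx ξ) p * pdy χ p + pdx ξ p * pdy (pdy χ) p)) := by
    intro p
    rw [pdy_mul (pdy_contDiff hψs) hG p,
      pdy_sub ((pdy_contDiff hξs).mul (pdx_contDiff hχs))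
        ((pdx_contDiff hξs).mul (pdy_contDiff hχs)) p,
      pdy_mul (pdy_contDiff hξs) (pdx_contDiff hχs) p,
      pdy_mul (pdx_contDiff hξs) (pdy_contDiff hχs) p]
  -- pointwise identity
  have hkey : (fun p => lap ψ p * (pdy ξ p * pdx χ p - pdx ξ p * pdy χ p))
      = fun p =>
        (((pdy χ p * pdy (pdx ξ) p - pdx χ p * pdy (pdy ξ) p) * pdy ψ p
            - (pdx χ p * pdy (pdx ξ) p - pdy χ p * pdx (pdx ξ) p) * pdx ψ p)
          - ((pdy ξ p * pdy (pdx χ) p - pdx ξ p * pdy (pdy χ) p) * pdy ψ p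
            - (pdx ξ p * pdy (pdx χ) p - pdy ξ p * pdx (pdx χ) p) * pdx ψ p))
        + (pdx (fun q => pdx ψ q * (pdy ξ q * pdx χ q - pdx ξ q * pdy χ q)) p
          + pdy (fun q => pdy ψ q * (pdy ξ q * pdx χ q - pdx ξ q * pdy χ q)) p) := by
    funext p
    rw [hDx p, hDy p]
    simp only [lap]
    ring
  rw [eA, eB, eC, hkey]
  have hBC : Integrable (fun p =>
      ((pdy χ p * pdy (pdx ξ) p - pdx χ p * pdy (pdy ξ) p) * pdy ψ p
          - (pdx χ p * pdy (pdx ξ) p - pdy χ p * pdx (pdx ξ) p) * pdx ψ p)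
        - ((pdy ξ p * pdy (pdx χ) p - pdx ξ p * pdy (pdy χ) p) * pdy ψ p
          - (pdx ξ p * pdy (pdx χ) p - pdy ξ p * pdx (pdx χ) p) * pdx ψ p)) volume :=
    hBi.sub hCi
  have hDD : Integrable (fun p =>
      pdx (fun q => pdx ψ q * (pdy ξ q * pdx χ q - pdx ξ q * pdy χ q)) p
        + pdy (fun q => pdy ψ q * (pdy ξ q * pdx χ q - pdx ξ q * pdy χ q)) p) volume :=
    hDxi.add hDyi
  rw [integral_add hBC hDD, integral_sub hBi hCi, integral_add hDxi hDyi,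
    integral_pdx_zero hF1s hF1c, integral_pdy_zero hF2s hF2c]
  ring
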